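/- arXiv:2407.21585 — 6 statements merged into one kernel-verified Lean document; each statement's English description precedes it below -/
import Mathlib

section
/- Every slice of the closed unit ball of the projective tensor product X ⊗̂π Y contains an elementary tensor x ⊗ y with x in the closed unit ball of X and y in the closed unit ball of Y. -/
open NormedSpace Metric Set MeasureTheory

noncomputable section

/-- The ballSlice of the closed unit ball of `X` determined by the functional `f` and `α`:
`S(B_X, f, α) = { x ∈ B_X : f x > sup f(B_X) - α }`. -/
def ballSlice {X : Type*} [NormedAddCommGroup X] [NormedSpace ℝ X]
    (f : StrongDual ℝ X) (α : ℝ) : Set X :=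
  {x | ‖x‖ ≤ 1 ∧ sSup ((fun z => f z) '' Metric.closedBall (0 : X) 1) - α < f x}

/-- The Daugavet property (geometric characterisation). -/
def HasDaugavet (X : Type*) [NormedAddCommGroup X] [NormedSpace ℝ X] : Prop :=
  ∀ x : X, ‖x‖ = 1 → ∀ ε : ℝ, 0 < ε → ∀ (f : StrongDual ℝ X) (α : ℝ), 0 < α →
    ∃ y ∈ ballSlice f α, 2 - ε < ‖x + y‖

/-- The weak operator Daugavet property (WODP). -/
def HasWODP (X : Type*) [NormedAddCommGroup X] [NormedSpace ℝ X] : Prop :=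
  ∀ (n : ℕ) (xs : Fin n → X), (∀ i, ‖xs i‖ = 1) → ∀ ε : ℝ, 0 < ε →
    ∀ (f : StrongDual ℝ X) (α : ℝ), 0 < α → ∀ x' : X, ‖x'‖ ≤ 1 →
      ∃ x ∈ ballSlice f α, ∃ T : X →L[ℝ] X, ‖T‖ ≤ 1 + ε ∧
        (∀ i, ‖T (xs i) - xs i‖ < ε) ∧ ‖T x - x'‖ < ε

/-- `U` is open in the weak topology of `X`. -/
def IsWeaklyOpen {X : Type*} [NormedAddCommGroup X] [NormedSpace ℝ X] (U : Set X) : Prop :=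
  ∀ x ∈ U, ∃ (n : ℕ) (f : Fin n → StrongDual ℝ X) (δ : ℝ), 0 < δ ∧
    {y : X | ∀ i, |(f i) (y - x)| < δ} ⊆ U

/-- `W` is a relatively weakly open subset of the closed unit ball of `X`. -/
def IsRelWeakOpenBall {X : Type*} [NormedAddCommGroup X] [NormedSpace ℝ X] (W : Set X) : Prop :=
  ∃ U : Set X, IsWeaklyOpen U ∧ W = U ∩ Metric.closedBall (0 : X) 1

/-- The diametral diameter two property (DD2P). -/
def HasDD2P (X : Type*) [NormedAddCommGroup X] [NormedSpace ℝ X] : Prop :=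
  ∀ W : Set X, IsRelWeakOpenBall W → W.Nonempty →
    ∀ z ∈ W, ‖z‖ = 1 → ∀ ε : ℝ, 0 < ε → ∃ w ∈ W, 2 - ε < ‖w - z‖

/-- The diameter two property (D2P). -/
def HasD2P (X : Type*) [NormedAddCommGroup X] [NormedSpace ℝ X] : Prop :=
  ∀ W : Set X, IsRelWeakOpenBall W → W.Nonempty → Metric.diam W = 2

/-- `Z` realises the projective tensor product `X ⊗̂π Y`: it carries a bilinear map with dense
span of elementary tensors, and finite sums of elementary tensors carry the projective norm. -/
structure IsProjTensor (X Y Z : Type*) [NormedAddCommGroup X] [NormedSpace ℝ X]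
    [NormedAddCommGroup Y] [NormedSpace ℝ Y] [NormedAddCommGroup Z] [NormedSpace ℝ Z] where
  e : X →ₗ[ℝ] Y →ₗ[ℝ] Z
  dense : Dense (Submodule.span ℝ {z : Z | ∃ x y, z = e x y} : Set Z)
  norm_eq : ∀ (n : ℕ) (x : Fin n → X) (y : Fin n → Y),
    ‖∑ i, e (x i) (y i)‖ =
      sInf {r : ℝ | ∃ (m : ℕ) (a : Fin m → X) (b : Fin m → Y),
        (∑ i, e (a i) (b i)) = ∑ i, e (x i) (y i) ∧ r = ∑ i, ‖a i‖ * ‖b i‖}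

/-- `Z` realises the injective tensor product `X ⊗̂ε Y`: it carries a bilinear map with dense
span of elementary tensors, and finite sums of elementary tensors carry the injective norm. -/
structure IsInjTensor (X Y Z : Type*) [NormedAddCommGroup X] [NormedSpace ℝ X]
    [NormedAddCommGroup Y] [NormedSpace ℝ Y] [NormedAddCommGroup Z] [NormedSpace ℝ Z] where
  e : X →ₗ[ℝ] Y →ₗ[ℝ] Z
  dense : Dense (Submodule.span ℝ {z : Z | ∃ x y, z = e x y} : Set Z)
  norm_eq : ∀ (n : ℕ) (x : Fin n → X) (y : Fin n → Y),
    ‖∑ i, e (x i) (y i)‖ =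
      sSup {r : ℝ | ∃ (f : StrongDual ℝ X) (g : StrongDual ℝ Y), ‖f‖ ≤ 1 ∧ ‖g‖ ≤ 1 ∧
        r = |∑ i, f (x i) * g (y i)|}

/-! Proof idea: a continuous functional `f` with `f (x ⊗ y) ≤ c` on `B_X × B_Y` satisfies
`f (x ⊗ y) ≤ c ‖x‖ ‖y‖` by homogeneity, hence `f z ≤ c ∑ ‖aᵢ‖ ‖bᵢ‖` for every representation
`z = ∑ aᵢ ⊗ bᵢ`, hence `f z ≤ c ‖z‖` on the algebraic tensors by the definition of the projective
norm, and on all of `Z` by density. Thus `sup f(B_Z)` is also the supremum of `f` over the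
elementary tensors `x ⊗ y` with `x ∈ B_X`, `y ∈ B_Y`. -/

theorem LinearMap.le_mul_norm_mul_norm_of_le_on_closedBall
    {X Y : Type*} [NormedAddCommGroup X] [NormedSpace ℝ X]
    [NormedAddCommGroup Y] [NormedSpace ℝ Y] (B : X →ₗ[ℝ] Y →ₗ[ℝ] ℝ) {c : ℝ}
    (hB : ∀ x y, ‖x‖ ≤ 1 → ‖y‖ ≤ 1 → B x y ≤ c) (x : X) (y : Y) :
    B x y ≤ c * (‖x‖ * ‖y‖) := by
  rcases eq_or_ne x 0 with rfl | hx
  · simp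
  rcases eq_or_ne y 0 with rfl | hy
  · simp
  have hxy : 0 < ‖x‖ * ‖y‖ := mul_pos (norm_pos_iff.mpr hx) (norm_pos_iff.mpr hy)
  have hscaled := hB (‖x‖⁻¹ • x) (‖y‖⁻¹ • y)
    (by simp [norm_smul, inv_mul_cancel₀ (norm_ne_zero_iff.mpr hx)])
    (by simp [norm_smul, inv_mul_cancel₀ (norm_ne_zero_iff.mpr hy)])
  have hB_scaled : B (‖x‖⁻¹ • x) (‖y‖⁻¹ • y) = B x y / (‖x‖ * ‖y‖) := by
    simp only [map_smul, LinearMap.smul_apply, smul_eq_mul]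
    field_simp
  rw [hB_scaled, div_le_iff₀ hxy] at hscaled
  exact hscaled

namespace IsProjTensor

variable {X Y Z : Type*} [NormedAddCommGroup X] [NormedSpace ℝ X]
  [NormedAddCommGroup Y] [NormedSpace ℝ Y] [NormedAddCommGroup Z] [NormedSpace ℝ Z]
  (h : IsProjTensor X Y Z)

theorem norm_e_le (x : X) (y : Y) : ‖h.e x y‖ ≤ ‖x‖ * ‖y‖ := by
  have hxy := h.norm_eq 1 (fun _ => x) (fun _ => y)
  simp only [Fin.sum_univ_one] at hxy
  rw [hxy]
  refine csInf_le ⟨0, ?_⟩ ⟨1, fun _ => x, fun _ => y, by simp, by simp⟩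
  rintro r ⟨m, a, b, -, rfl⟩
  exact Finset.sum_nonneg fun i _ => mul_nonneg (norm_nonneg _) (norm_nonneg _)

theorem exists_sum_eq_of_mem_span {z : Z}
    (hz : z ∈ Submodule.span ℝ {z : Z | ∃ x y, z = h.e x y}) :
    ∃ (n : ℕ) (a : Fin n → X) (b : Fin n → Y), z = ∑ i, h.e (a i) (b i) := by
  induction hz using Submodule.span_induction with
  | mem z hz =>
    obtain ⟨x, y, rfl⟩ := hz
    exact ⟨1, fun _ => x, fun _ => y, by simp⟩
  | zero => exact ⟨0, Fin.elim0, Fin.elim0, by simp⟩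
  | add z w _ _ hz hw =>
    obtain ⟨n, a, b, rfl⟩ := hz
    obtain ⟨m, c, d, rfl⟩ := hw
    exact ⟨n + m, Fin.append a c, Fin.append b d, by simp [Fin.sum_univ_add]⟩
  | smul r z _ hz =>
    obtain ⟨n, a, b, rfl⟩ := hz
    exact ⟨n, fun i => r • a i, b, by simp [Finset.smul_sum]⟩

theorem le_mul_norm_of_le_mul_norm_e (f : StrongDual ℝ Z) {c : ℝ}
    (hf : ∀ x y, f (h.e x y) ≤ c * (‖x‖ * ‖y‖)) (z : Z) : f z ≤ c * ‖z‖ := by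
  have hclosed : IsClosed {z : Z | f z ≤ c * ‖z‖} :=
    isClosed_le f.continuous (continuous_const.mul continuous_norm)
  have hspan : (Submodule.span ℝ {z : Z | ∃ x y, z = h.e x y} : Set Z) ⊆
      {z : Z | f z ≤ c * ‖z‖} := by
    intro z hz
    obtain ⟨n, a, b, rfl⟩ := h.exists_sum_eq_of_mem_span hz
    set S := {r : ℝ | ∃ (m : ℕ) (a' : Fin m → X) (b' : Fin m → Y),
      (∑ i, h.e (a' i) (b' i)) = ∑ i, h.e (a i) (b i) ∧ r = ∑ i, ‖a' i‖ * ‖b' i‖}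
    have hS : S ⊆ {r | f (∑ i, h.e (a i) (b i)) ≤ c * r} := by
      rintro r ⟨m, a', b', hsum, rfl⟩
      rw [Set.mem_ofPred_eq, ← hsum, map_sum, Finset.mul_sum]
      exact Finset.sum_le_sum fun i _ => hf (a' i) (b' i)
    have hS_bdd : BddBelow S := ⟨0, by
      rintro r ⟨m, a', b', -, rfl⟩
      exact Finset.sum_nonneg fun i _ => mul_nonneg (norm_nonneg _) (norm_nonneg _)⟩
    -- `‖z‖ = sInf S` lies in the closure of `S`, so no case split on the sign of `c` is needed
    have hinf := closure_minimal hS (isClosed_le continuous_const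
      (continuous_const.mul continuous_id)) (csInf_mem_closure ⟨_, n, a, b, rfl, rfl⟩ hS_bdd)
    rwa [Set.mem_ofPred_eq, ← h.norm_eq] at hinf
  exact hclosed.closure_subset_iff.mpr hspan (h.dense z)

theorem le_of_le_on_e_closedBall (f : StrongDual ℝ Z) {c : ℝ}
    (hf : ∀ x y, ‖x‖ ≤ 1 → ‖y‖ ≤ 1 → f (h.e x y) ≤ c) {z : Z} (hz : ‖z‖ ≤ 1) : f z ≤ c := by
  have hc : 0 ≤ c := by simpa using hf 0 0 (by simp) (by simp)
  calc f z ≤ c * ‖z‖ := h.le_mul_norm_of_le_mul_norm_e f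
        ((h.e.compr₂ f.toLinearMap).le_mul_norm_mul_norm_of_le_on_closedBall hf) z
    _ ≤ c := mul_le_of_le_one_right hc hz

end IsProjTensor

theorem stmt0_general {X Y Z : Type*} [NormedAddCommGroup X] [NormedSpace ℝ X]
    [NormedAddCommGroup Y] [NormedSpace ℝ Y]
    [NormedAddCommGroup Z] [NormedSpace ℝ Z]
    (h : IsProjTensor X Y Z) (f : StrongDual ℝ Z) (α : ℝ) (hα : 0 < α) :
    ∃ (x : X) (y : Y), ‖x‖ ≤ 1 ∧ ‖y‖ ≤ 1 ∧ h.e x y ∈ ballSlice f α := by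
  by_contra! hnone
  set M := sSup ((fun z => f z) '' closedBall (0 : Z) 1)
  have hsmall : ∀ (x : X) (y : Y), ‖x‖ ≤ 1 → ‖y‖ ≤ 1 → f (h.e x y) ≤ M - α := by
    intro x y hx hy
    have hnorm : ‖h.e x y‖ ≤ 1 := (h.norm_e_le x y).trans (mul_le_one₀ hx (norm_nonneg y) hy)
    simpa [ballSlice, hnorm] using hnone x y hx hy
  have hM : M ≤ M - α := csSup_le ⟨f 0, 0, by simp⟩ <| by
    rintro _ ⟨z, hz, rfl⟩
    exact h.le_of_le_on_e_closedBall f hsmall (by simpa using hz)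
  linarith

/-- Every slice of the unit ball of `X ⊗̂π Y` contains an elementary tensor `x ⊗ y`
with `x ∈ B_X` and `y ∈ B_Y`. -/
theorem stmt0 {X Y Z : Type*} [NormedAddCommGroup X] [NormedSpace ℝ X] [CompleteSpace X]
    [NormedAddCommGroup Y] [NormedSpace ℝ Y] [CompleteSpace Y]
    [NormedAddCommGroup Z] [NormedSpace ℝ Z] [CompleteSpace Z]
    (h : IsProjTensor X Y Z) (f : StrongDual ℝ Z) (α : ℝ) (hα : 0 < α) :
    ∃ (x : X) (y : Y), ‖x‖ ≤ 1 ∧ ‖y‖ ≤ 1 ∧ h.e x y ∈ ballSlice f α :=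
  stmt0_general h f α hα
end
end

section
/- If a Banach space X has the Daugavet property, then every nonempty relatively weakly open subset of the closed unit ball of X has diameter exactly two. -/
open NormedSpace Metric Set MeasureTheory

noncomputable section

/-!
By Bourgain's lemma, a nonempty relatively weakly open subset `W` of `B_X` contains a convex
combination `∑ lⱼ • Sⱼ` of slices `Sⱼ`: the image of `B_X` under finitely many functionals has
compact convex closure in `ℝⁿ`, whose points are, by Krein–Milman, close to convex combinations
of extreme points, and at an extreme point of a compact convex set in finite dimension the slices
form a neighbourhood basis. Applying the Daugavet property slice by slice gives, for every `v`,
points `yⱼ ∈ Sⱼ` with `‖v + ∑ lⱼ • yⱼ‖` almost `‖v‖ + 1`. For `v = 0` this yields `w₁ ∈ W` of norm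
almost `1`, and then for `v = -w₁` some `w₂ ∈ W` with `‖w₂ - w₁‖` almost `2`.
-/

open Filter Topology

theorem IsCompact.convexHull {E : Type*} [NormedAddCommGroup E] [NormedSpace ℝ E]
    [FiniteDimensional ℝ E] {S : Set E} (hS : IsCompact S) : IsCompact (convexHull ℝ S) := by
  have hunion : _root_.convexHull ℝ S = ⋃ k ∈ Finset.range (Module.finrank ℝ E + 2),
      (fun p : (Fin k → ℝ) × (Fin k → E) => ∑ i, p.1 i • p.2 i) ''
        (stdSimplex ℝ (Fin k) ×ˢ univ.pi fun _ => S) := by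
    refine Subset.antisymm (fun x hx => ?_) (iUnion₂_subset fun k _ => ?_)
    · obtain ⟨ι, _, z, w, hzS, hz, hw0, hw1, rfl⟩ := eq_pos_convex_span_of_mem_convexHull hx
      have hcard : Fintype.card ι ≤ Module.finrank ℝ E + 1 :=
        hz.card_le_finrank_succ.trans (Nat.succ_le_succ (Submodule.finrank_le _))
      let e := (Fintype.equivFin ι).symm
      refine mem_iUnion₂.2 ⟨_, Finset.mem_range.2 (Nat.lt_succ_of_le hcard),
        (w ∘ e, z ∘ e), ⟨⟨fun i => (hw0 _).le, ?_⟩, fun i _ => hzS (mem_range_self _)⟩, ?_⟩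
      · simpa [e] using e.sum_comp w |>.trans hw1
      · exact e.sum_comp fun i => w i • z i
    · rintro _ ⟨⟨w, z⟩, ⟨⟨hw0, hw1⟩, hz⟩, rfl⟩
      exact mem_convexHull_of_exists_fintype w z hw0 hw1 (fun i => hz i (mem_univ i)) rfl
  rw [hunion]
  exact (Finset.range _).isCompact_biUnion fun k _ =>
    ((isCompact_stdSimplex ℝ _).prod (isCompact_univ_pi fun _ => hS)).image (by fun_prop)

theorem Continuous.csSup_image_closure {α : Type*} [TopologicalSpace α] {f : α → ℝ}
    (hf : Continuous f) {A : Set α} (hA : A.Nonempty) (hbdd : BddAbove (f '' A)) :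
    sSup (f '' closure A) = sSup (f '' A) :=
  ((isLUB_iff_of_subset_of_subset_closure (image_mono subset_closure)
    (image_closure_subset_closure_image hf)).1 (isLUB_csSup (hA.image f) hbdd)).csSup_eq
    ((hA.image f).mono (image_mono subset_closure))

theorem IsCompact.exists_slice_subset_ball_of_mem_extremePoints {E : Type*}
    [NormedAddCommGroup E] [NormedSpace ℝ E] [FiniteDimensional ℝ E] {K : Set E}
    (hKc : IsCompact K) (hKconv : Convex ℝ K) {p : E} (hp : p ∈ K.extremePoints ℝ) {η : ℝ}
    (hη : 0 < η) :
    ∃ (φ : StrongDual ℝ E) (α : ℝ), 0 < α ∧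
      ∀ k ∈ K, sSup (φ '' K) - α < φ k → dist k p < η := by
  have hpC : p ∉ _root_.convexHull ℝ (K \ ball p η) := fun hpC =>
    (hKconv.mem_extremePoints_iff_mem_sdiff_convexHull_sdiff.1 hp).2 <|
      convexHull_mono (sdiff_subset_sdiff_right (singleton_subset_iff.2 (mem_ball_self hη))) hpC
  obtain ⟨f, u, hfu, hf⟩ := geometric_hahn_banach_point_closed (convex_convexHull ℝ _)
    ((hKc.diff isOpen_ball).convexHull).isClosed hpC
  have hfp : -f p ≤ sSup ((-f) '' K) :=
    le_csSup (hKc.image (-f).continuous).bddAbove (mem_image_of_mem _ hp.1)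
  refine ⟨-f, u - f p, by linarith, fun k hk hslice => ?_⟩
  by_contra hkp
  have := hf k (subset_convexHull ℝ _ ⟨hk, fun h => hkp (mem_ball.1 h)⟩)
  simp only [neg_apply] at hslice hfp
  linarith

theorem IsCompact.exists_sum_smul_slices_subset_ball {E : Type*} [NormedAddCommGroup E]
    [NormedSpace ℝ E] [FiniteDimensional ℝ E] {K : Set E} (hKc : IsCompact K)
    (hKconv : Convex ℝ K) {q : E} (hq : q ∈ K) {δ : ℝ} (hδ : 0 < δ) :
    ∃ (m : ℕ) (φ : Fin m → StrongDual ℝ E) (α l : Fin m → ℝ),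
      (∀ j, 0 < α j) ∧ (∀ j, 0 ≤ l j) ∧ ∑ j, l j = 1 ∧
      ∀ k : Fin m → E, (∀ j, k j ∈ K ∧ sSup (φ j '' K) - α j < φ j (k j)) →
        dist (∑ j, l j • k j) q < δ := by
  rw [← closure_convexHull_extremePoints hKc hKconv] at hq
  obtain ⟨q', hq', hqq'⟩ := Metric.mem_closure_iff.1 hq (δ / 2) (half_pos hδ)
  obtain ⟨ι, _, w, z, hw0, hw1, hz, rfl⟩ := mem_convexHull_iff_exists_fintype.1 hq'
  let e := (Fintype.equivFin ι).symm
  choose φ α hα hφ using fun j => hKc.exists_slice_subset_ball_of_mem_extremePoints hKconv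
    (hz (e j)) (half_pos hδ)
  refine ⟨_, φ, α, w ∘ e, hα, fun j => hw0 (e j), (e.sum_comp w).trans hw1, fun k hk => ?_⟩
  have hclose : ∑ j, w (e j) • (k j - z (e j)) ∈ ball (0 : E) (δ / 2) :=
    (convex_ball 0 _).sum_mem (fun j _ => hw0 (e j)) ((e.sum_comp w).trans hw1)
      fun j _ => mem_ball_zero_iff.2 (by rw [← dist_eq_norm]; exact hφ j _ (hk j).1 (hk j).2)
  rw [mem_ball_zero_iff] at hclose
  calc dist (∑ j, w (e j) • k j) q
      ≤ ‖∑ j, w (e j) • (k j - z (e j))‖ + dist (∑ i, w i • z i) q := by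
        rw [← e.sum_comp fun i => w i • z i, dist_eq_norm, dist_eq_norm]
        simp only [smul_sub, Finset.sum_sub_distrib]
        exact norm_sub_le_norm_sub_add_norm_sub _ _ _
    _ < δ / 2 + δ / 2 := add_lt_add hclose (by rwa [dist_comm])
    _ = δ := add_halves δ

theorem IsRelWeakOpenBall.exists_sum_smul_ballSlice_subset {X : Type*} [NormedAddCommGroup X]
    [NormedSpace ℝ X] {W : Set X} (hW : IsRelWeakOpenBall W) (hne : W.Nonempty) :
    ∃ (m : ℕ) (g : Fin m → StrongDual ℝ X) (α l : Fin m → ℝ),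
      (∀ j, 0 < α j) ∧ (∀ j, 0 ≤ l j) ∧ ∑ j, l j = 1 ∧
      ∀ y : Fin m → X, (∀ j, y j ∈ ballSlice (g j) (α j)) → ∑ j, l j • y j ∈ W := by
  obtain ⟨U, hU, rfl⟩ := hW
  obtain ⟨u, huU, huB⟩ := hne
  obtain ⟨n, f, δ, hδ, hUδ⟩ := hU u huU
  let T : X →L[ℝ] Fin n → ℝ := ContinuousLinearMap.pi f
  let A := T '' closedBall 0 1
  have hAc : IsCompact (closure A) :=
    (T.lipschitz.isBounded_image isBounded_closedBall).isCompact_closure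
  have hAconv : Convex ℝ (closure A) :=
    ((convex_closedBall 0 1).linear_image T.toLinearMap).closure
  obtain ⟨m, φ, α, l, hα, hl0, hl1, hφ⟩ := hAc.exists_sum_smul_slices_subset_ball hAconv
    (subset_closure (mem_image_of_mem T huB)) hδ
  refine ⟨m, fun j => (φ j).comp T, α, l, hα, hl0, hl1, fun y hy => ⟨hUδ fun i => ?_,
    (convex_closedBall 0 1).sum_mem (fun j _ => hl0 j) hl1
      fun j _ => mem_closedBall_zero_iff.2 (hy j).1⟩⟩
  have hsup : ∀ j, sSup (φ j '' closure A) = sSup ((fun z => (φ j).comp T z) '' closedBall 0 1) :=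
    fun j => by
      rw [(φ j).continuous.csSup_image_closure ((nonempty_closedBall.2 zero_le_one).image T)
        ((hAc.image (φ j).continuous).bddAbove.mono (image_mono subset_closure)), image_image]
      rfl
  have hTy := hφ (fun j => T (y j)) fun j =>
    ⟨subset_closure (mem_image_of_mem T (mem_closedBall_zero_iff.2 (hy j).1)),
      (hsup j).symm ▸ (hy j).2⟩
  simp only [← map_smul, ← map_sum] at hTy
  simpa [T, Real.dist_eq] using (dist_pi_lt_iff hδ).1 hTy i

namespace HasDaugavet

variable {X : Type*} [NormedAddCommGroup X] [NormedSpace ℝ X] [Nontrivial X]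

theorem exists_mem_ballSlice_mul_le_norm_add_smul (h : HasDaugavet X) (f : StrongDual ℝ X)
    {α : ℝ} (hα : 0 < α) {c : ℝ} (hc : c < 1) (v : X) {t : ℝ} (ht : 0 ≤ t) :
    ∃ y ∈ ballSlice f α, c * (‖v‖ + t) ≤ ‖v + t • y‖ := by
  obtain ⟨u, hu, hvu⟩ : ∃ u : X, ‖u‖ = 1 ∧ v = ‖v‖ • u := by
    rcases eq_or_ne v 0 with rfl | hv
    · obtain ⟨u, hu⟩ := exists_norm_eq X zero_le_one
      exact ⟨u, hu, by simp⟩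
    · exact ⟨‖v‖⁻¹ • v, norm_smul_inv_norm hv, by rw [smul_inv_smul₀ (norm_ne_zero_iff.2 hv)]⟩
  obtain ⟨y, hy, hdaug⟩ := h u hu (1 - c) (sub_pos.2 hc) f α hα
  obtain ⟨g, hg, hgnorm⟩ := exists_dual_vector'' ℝ (u + y)
  have hg_le : ∀ x, g x ≤ ‖x‖ := fun x =>
    (le_abs_self _).trans ((g.le_of_opNorm_le hg x).trans_eq (one_mul _))
  -- `g` almost norms both `u` and `y`, since `g (u + y) = ‖u + y‖ > 1 + c`.
  have hguy : g u + g y = ‖u + y‖ := by rw [← map_add]; exact_mod_cast hgnorm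
  have hgu : c ≤ g u := by linarith [hg_le y, hy.1]
  have hgy : c ≤ g y := by linarith [hg_le u]
  refine ⟨y, hy, ?_⟩
  calc c * (‖v‖ + t) ≤ ‖v‖ * g u + t * g y := by nlinarith [norm_nonneg v]
    _ = g (v + t • y) := by conv_rhs => rw [hvu]; simp
    _ ≤ ‖v + t • y‖ := hg_le _

theorem exists_forall_mem_ballSlice_pow_mul_le_norm_add_sum (h : HasDaugavet X) {ι : Type*}
    (g : ι → StrongDual ℝ X) {α : ι → ℝ} (hα : ∀ j, 0 < α j) {l : ι → ℝ}
    (hl : ∀ j, 0 ≤ l j) {c : ℝ} (hc0 : 0 ≤ c) (hc1 : c < 1) (v : X) (s : Finset ι) :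
    ∃ y : ι → X, (∀ j ∈ s, y j ∈ ballSlice (g j) (α j)) ∧
      c ^ s.card * (‖v‖ + ∑ j ∈ s, l j) ≤ ‖v + ∑ j ∈ s, l j • y j‖ := by
  classical
  induction s using Finset.induction_on with
  | empty => exact ⟨0, by simp, by simp⟩
  | insert a s ha ih =>
    obtain ⟨y, hy, hnorm⟩ := ih
    obtain ⟨ya, hya, hnorma⟩ := h.exists_mem_ballSlice_mul_le_norm_add_smul (g a) (hα a) hc1
      (v + ∑ j ∈ s, l j • y j) (hl a)
    have hsum : ∑ j ∈ s, l j • Function.update y a ya j = ∑ j ∈ s, l j • y j :=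
      Finset.sum_congr rfl fun j hj => by rw [Function.update_of_ne (ne_of_mem_of_not_mem hj ha)]
    refine ⟨Function.update y a ya, fun j hj => ?_, ?_⟩
    · rcases Finset.mem_insert.1 hj with rfl | hj
      · simpa using hya
      · simpa [Function.update_of_ne (ne_of_mem_of_not_mem hj ha)] using hy j hj
    · have hpow : c ^ s.card ≤ 1 := pow_le_one₀ hc0 hc1.le
      rw [Finset.sum_insert ha, Finset.sum_insert ha, Finset.card_insert_of_notMem ha,
        Function.update_self, hsum]
      calc c ^ (s.card + 1) * (‖v‖ + (l a + ∑ j ∈ s, l j))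
          ≤ c * (c ^ s.card * (‖v‖ + ∑ j ∈ s, l j) + l a) := by
            rw [pow_succ]; nlinarith [mul_le_mul_of_nonneg_right hpow (hl a)]
        _ ≤ c * (‖v + ∑ j ∈ s, l j • y j‖ + l a) := by gcongr
        _ ≤ ‖v + ∑ j ∈ s, l j • y j + l a • ya‖ := hnorma
        _ = ‖v + (l a • ya + ∑ j ∈ s, l j • y j)‖ := by rw [add_comm (l a • ya), add_assoc]

theorem exists_mem_lt_norm_add (h : HasDaugavet X) {W : Set X} (hW : IsRelWeakOpenBall W)
    (hne : W.Nonempty) (v : X) {ε : ℝ} (hε : 0 < ε) : ∃ w ∈ W, ‖v‖ + 1 - ε < ‖v + w‖ := by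
  obtain ⟨m, g, α, l, hα, hl0, hl1, hW⟩ := hW.exists_sum_smul_ballSlice_subset hne
  have hlim : Tendsto (fun c : ℝ => c ^ m * (‖v‖ + 1)) (𝓝[<] 1) (𝓝 (‖v‖ + 1)) := by
    simpa using (show Continuous fun c : ℝ => c ^ m * (‖v‖ + 1) by fun_prop).continuousAt.tendsto
      |>.mono_left (nhdsWithin_le_nhds (a := (1 : ℝ)))
  obtain ⟨c, hc, hc01⟩ :=
    ((hlim.eventually_const_lt (sub_lt_self _ hε)).and (Ioo_mem_nhdsLT one_pos)).exists
  obtain ⟨y, hy, hnorm⟩ := h.exists_forall_mem_ballSlice_pow_mul_le_norm_add_sum g hα hl0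
    hc01.1.le hc01.2 v Finset.univ
  rw [Finset.card_univ, Fintype.card_fin, hl1] at hnorm
  exact ⟨_, hW y fun j => hy j (Finset.mem_univ j), hc.trans_le hnorm⟩

end HasDaugavet

theorem stmt1_general {X : Type*} [NormedAddCommGroup X] [NormedSpace ℝ X]
    [Nontrivial X] (h : HasDaugavet X) :
    ∀ W : Set X, IsRelWeakOpenBall W → W.Nonempty → Metric.diam W = 2 := by
  intro W hW hne
  have hWB : W ⊆ closedBall (0 : X) 1 := by
    obtain ⟨U, -, rfl⟩ := hW
    exact inter_subset_right
  refine le_antisymm ((diam_mono hWB isBounded_closedBall).trans ?_) ?_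
  · simpa using diam_closedBall (x := (0 : X)) zero_le_one
  refine le_of_forall_pos_lt_add fun ε hε => ?_
  obtain ⟨w₁, hw₁, h₁⟩ := h.exists_mem_lt_norm_add hW hne 0 (half_pos hε)
  obtain ⟨w₂, hw₂, h₂⟩ := h.exists_mem_lt_norm_add hW hne (-w₁) (half_pos hε)
  have hdist := dist_le_diam_of_mem (isBounded_closedBall.subset hWB) hw₂ hw₁
  rw [dist_eq_norm, sub_eq_neg_add] at hdist
  rw [zero_add, norm_zero] at h₁
  rw [norm_neg] at h₂
  linarith

/-- If `X` has the Daugavet property then every nonempty relatively weakly open subset of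
`B_X` has diameter exactly two. -/
theorem stmt1 {X : Type*} [NormedAddCommGroup X] [NormedSpace ℝ X] [CompleteSpace X]
    [Nontrivial X] (h : HasDaugavet X) :
    ∀ W : Set X, IsRelWeakOpenBall W → W.Nonempty → Metric.diam W = 2 :=
  stmt1_general h
end
end

section
/- In the definition of the weak operator Daugavet property, the operator T may always be chosen with ‖T‖ < 1: if X has the WODP, then given x_1,…,x_n ∈ S_X, ε > 0, a slice S of B_X and x' ∈ B_X, there exist x ∈ S and a bounded linear operator T : X → X with ‖T‖ < 1, ‖T(x_i) − x_i‖ < ε for all i, and ‖T(x) − x'‖ < ε. -/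
open NormedSpace Metric Set MeasureTheory

noncomputable section

theorem ContinuousLinearMap.exists_opNorm_lt_one_norm_sub_apply_le {E F : Type*}
    [SeminormedAddCommGroup E] [NormedSpace ℝ E] [SeminormedAddCommGroup F] [NormedSpace ℝ F]
    (T : E →L[ℝ] F) {δ : ℝ} (hδ : 0 < δ) (hT : ‖T‖ ≤ 1 + δ) :
    ∃ S : E →L[ℝ] F, ‖S‖ < 1 ∧ ∀ y, ‖S y - T y‖ ≤ 2 * δ * ‖y‖ := by
  set c : ℝ := (1 + 2 * δ)⁻¹
  have hc : 0 < c := by positivity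
  have hc_mul : c * (1 + δ) < 1 := by rw [inv_mul_lt_iff₀ (by positivity)]; linarith
  have one_sub_c : 1 - c = 2 * δ * c := by simp only [c]; field_simp; ring
  have sub_c_smul (v : F) : v - c • v = (1 - c) • v := by rw [sub_smul, one_smul]
  refine ⟨c • T, ?_, fun y => ?_⟩
  · calc ‖c • T‖ = c * ‖T‖ := by rw [norm_smul, Real.norm_of_nonneg hc.le]
      _ ≤ c * (1 + δ) := by gcongr
      _ < 1 := hc_mul
  · calc ‖(c • T) y - T y‖ = 2 * δ * c * ‖T y‖ := by
          rw [smul_apply, ← neg_sub, norm_neg, sub_c_smul, norm_smul,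
            Real.norm_of_nonneg (by linarith), one_sub_c]
      _ ≤ 2 * δ * c * ((1 + δ) * ‖y‖) := by gcongr; exact T.le_of_opNorm_le hT y
      _ = 2 * δ * (c * (1 + δ)) * ‖y‖ := by ring
      _ ≤ 2 * δ * ‖y‖ :=
          mul_le_mul_of_nonneg_right (mul_le_of_le_one_right (by positivity) hc_mul.le)
            (norm_nonneg y)

theorem stmt2_general {X : Type*} [NormedAddCommGroup X] [NormedSpace ℝ X]
    (h : HasWODP X) (n : ℕ) (xs : Fin n → X) (hxs : ∀ i, ‖xs i‖ = 1)
    (ε : ℝ) (hε : 0 < ε) (f : StrongDual ℝ X) (α : ℝ) (hα : 0 < α)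
    (x' : X) (hx' : ‖x'‖ ≤ 1) :
    ∃ x ∈ ballSlice f α, ∃ T : X →L[ℝ] X, ‖T‖ < 1 ∧
      (∀ i, ‖T (xs i) - xs i‖ < ε) ∧ ‖T x - x'‖ < ε := by
  have hε3 : 0 < ε / 3 := by positivity
  obtain ⟨x, hx, T, hT, hTxs, hTx⟩ := h n xs hxs (ε / 3) hε3 f α hα x' hx'
  obtain ⟨S, hS, hST⟩ := T.exists_opNorm_lt_one_norm_sub_apply_le hε3 hT
  have close : ∀ y y' : X, ‖y‖ ≤ 1 → ‖T y - y'‖ < ε / 3 → ‖S y - y'‖ < ε := fun y y' hy hTy =>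
    calc ‖S y - y'‖ ≤ ‖S y - T y‖ + ‖T y - y'‖ := norm_sub_le_norm_sub_add_norm_sub _ _ _
      _ < 2 * (ε / 3) * 1 + ε / 3 :=
          add_lt_add_of_le_of_lt ((hST y).trans (by gcongr)) hTy
      _ = ε := by ring
  exact ⟨x, hx, S, hS, fun i => close _ _ (hxs i).le (hTxs i), close _ _ hx.1 hTx⟩

/-- In the definition of the WODP the operator may be chosen with `‖T‖ < 1`. -/
theorem stmt2 {X : Type*} [NormedAddCommGroup X] [NormedSpace ℝ X] [CompleteSpace X]
    (h : HasWODP X) (n : ℕ) (xs : Fin n → X) (hxs : ∀ i, ‖xs i‖ = 1)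
    (ε : ℝ) (hε : 0 < ε) (f : StrongDual ℝ X) (α : ℝ) (hα : 0 < α)
    (x' : X) (hx' : ‖x'‖ ≤ 1) :
    ∃ x ∈ ballSlice f α, ∃ T : X →L[ℝ] X, ‖T‖ < 1 ∧
      (∀ i, ‖T (xs i) - xs i‖ < ε) ∧ ‖T x - x'‖ < ε :=
  stmt2_general h n xs hxs ε hε f α hα x' hx'
end
end

section
/- A Banach space X has the Daugavet property if and only if for every x* ∈ S_{X*}, every ε > 0 and every weak-star slice S of B_{X*}, there exists y* ∈ S such that ‖y* − x*‖ > 2 − ε. -/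
open NormedSpace Metric Set MeasureTheory

noncomputable section

/-- The weak-star slice of `B_{X*}` determined by `x ∈ X` and `α > 0`. -/
def wstarSlice {X : Type*} [NormedAddCommGroup X] [NormedSpace ℝ X]
    (x : X) (α : ℝ) : Set (StrongDual ℝ X) :=
  {f | ‖f‖ ≤ 1 ∧ sSup ((fun g : StrongDual ℝ X => g x) '' Metric.closedBall (0 : StrongDual ℝ X) 1) - α < f x}

/-!
Both slices are sets of almost norming elements: `‖f‖ = sup f(B_X)`, and by Hahn–Banach
`‖x‖ = sup {g x : g ∈ B_{X*}}`. Given the Daugavet property, take `y` in the slice of `-f` with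
`‖x / ‖x‖ + y‖ ≈ 2` and a functional `g ∈ B_{X*}` almost norming `x / ‖x‖ + y`; then `g` is almost
`1` at `x / ‖x‖` (so lies in the weak-star slice of `x`) and `(g - f) y ≈ 2`. Conversely, take `g`
in the weak-star slice of `x` with `‖g + f / ‖f‖‖ ≈ 2` and `y ∈ B_X` almost norming `g + f / ‖f‖`;
then `y` lies in the slice of `f` and `g (x + y) ≈ 2`.
-/

section Duality

variable {E : Type*} [NormedAddCommGroup E] [NormedSpace ℝ E]

theorem StrongDual.apply_le_norm (f : StrongDual ℝ E) {z : E} (hz : ‖z‖ ≤ 1) : f z ≤ ‖f‖ :=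
  (le_abs_self _).trans (by simpa using f.le_of_opNorm_le_of_le le_rfl hz)

theorem StrongDual.apply_le_norm_of_norm_le_one {f : StrongDual ℝ E} (hf : ‖f‖ ≤ 1) (z : E) :
    f z ≤ ‖z‖ :=
  (le_abs_self _).trans (by simpa using f.le_of_opNorm_le_of_le hf le_rfl)

-- A real functional is odd, so the sign of the vector given by the operator-norm bound is free.
theorem StrongDual.exists_norm_le_one_lt_apply (f : StrongDual ℝ E) {r : ℝ} (hr : r < ‖f‖) :
    ∃ z : E, ‖z‖ ≤ 1 ∧ r < f z := by
  obtain ⟨z, hz, hrz⟩ := f.exists_lt_apply_of_lt_opNorm hr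
  rcases lt_abs.1 (Real.norm_eq_abs (f z) ▸ hrz) with h | h
  · exact ⟨z, hz.le, h⟩
  · exact ⟨-z, by simpa using hz.le, by simpa using h⟩

theorem norm_inclusionInDoubleDual (x : E) : ‖inclusionInDoubleDual ℝ E x‖ = ‖x‖ :=
  (inclusionInDoubleDualLi ℝ).norm_map x

theorem StrongDual.exists_norm_le_one_lt_apply_eval (x : E) {r : ℝ} (hr : r < ‖x‖) :
    ∃ g : StrongDual ℝ E, ‖g‖ ≤ 1 ∧ r < g x :=
  (inclusionInDoubleDual ℝ E x).exists_norm_le_one_lt_apply (by rwa [norm_inclusionInDoubleDual])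

theorem StrongDual.sSup_image_closedBall_eq_norm (f : StrongDual ℝ E) :
    sSup ((fun z => f z) '' closedBall (0 : E) 1) = ‖f‖ := by
  refine csSup_eq_of_forall_le_of_forall_lt_exists_gt
    ((nonempty_closedBall.2 zero_le_one).image _) ?_ fun r hr => ?_
  · rintro - ⟨z, hz, rfl⟩
    exact f.apply_le_norm (mem_closedBall_zero_iff.1 hz)
  · obtain ⟨z, hz, hrz⟩ := f.exists_norm_le_one_lt_apply hr
    exact ⟨f z, ⟨z, mem_closedBall_zero_iff.2 hz, rfl⟩, hrz⟩

theorem StrongDual.sSup_image_closedBall_eval_eq_norm (x : E) :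
    sSup ((fun g : StrongDual ℝ E => g x) '' closedBall (0 : StrongDual ℝ E) 1) = ‖x‖ :=
  ((inclusionInDoubleDual ℝ E x).sSup_image_closedBall_eq_norm).trans
    (norm_inclusionInDoubleDual x)

end Duality

theorem sub_lt_of_one_sub_lt_inv_mul {r t δ α : ℝ} (hr : 0 < r) (hδ : δ ≤ α / r)
    (h : 1 - δ < r⁻¹ * t) : r - α < t := by
  have hδr : δ * r ≤ α := (le_div_iff₀ hr).1 hδ
  have hrt : r * (1 - δ) < t := (lt_inv_mul_iff₀ hr).1 h
  linarith

section Slices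

variable {X : Type*} [NormedAddCommGroup X] [NormedSpace ℝ X]

theorem norm_inv_norm_smul_self {x : X} (hx : x ≠ 0) : ‖‖x‖⁻¹ • x‖ = 1 := by
  rw [norm_smul, norm_inv, norm_norm, inv_mul_cancel₀ (norm_ne_zero_iff.2 hx)]

theorem mem_ballSlice_iff {f : StrongDual ℝ X} {α : ℝ} {y : X} :
    y ∈ ballSlice f α ↔ ‖y‖ ≤ 1 ∧ ‖f‖ - α < f y := by
  rw [ballSlice, mem_ofPred_eq, StrongDual.sSup_image_closedBall_eq_norm]

theorem mem_wstarSlice_iff {x : X} {α : ℝ} {g : StrongDual ℝ X} :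
    g ∈ wstarSlice x α ↔ ‖g‖ ≤ 1 ∧ ‖x‖ - α < g x := by
  rw [wstarSlice, mem_ofPred_eq, StrongDual.sSup_image_closedBall_eval_eq_norm]

theorem mem_ballSlice_of_one_sub_lt {f : StrongDual ℝ X} (hf : f ≠ 0) {y : X} (hy : ‖y‖ ≤ 1)
    {δ α : ℝ} (hδ : δ ≤ α / ‖f‖) (h : 1 - δ < (‖f‖⁻¹ • f) y) : y ∈ ballSlice f α :=
  mem_ballSlice_iff.2 ⟨hy, sub_lt_of_one_sub_lt_inv_mul (norm_pos_iff.2 hf) hδ h⟩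

theorem mem_wstarSlice_of_one_sub_lt {x : X} (hx : x ≠ 0) {g : StrongDual ℝ X} (hg : ‖g‖ ≤ 1)
    {δ α : ℝ} (hδ : δ ≤ α / ‖x‖) (h : 1 - δ < g (‖x‖⁻¹ • x)) : g ∈ wstarSlice x α :=
  mem_wstarSlice_iff.2
    ⟨hg, sub_lt_of_one_sub_lt_inv_mul (norm_pos_iff.2 hx) hδ (by rwa [map_smul] at h)⟩

end Slices

section Daugavet

variable {X : Type*} [NormedAddCommGroup X] [NormedSpace ℝ X]

theorem HasDaugavet.exists_mem_wstarSlice_two_sub_lt_norm_sub (H : HasDaugavet X)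
    {f : StrongDual ℝ X} (hf : ‖f‖ = 1) {ε : ℝ} (hε : 0 < ε) (x : X) {α : ℝ} (hα : 0 < α) :
    ∃ g ∈ wstarSlice x α, 2 - ε < ‖g - f‖ := by
  rcases eq_or_ne x 0 with rfl | hx
  · refine ⟨-f, mem_wstarSlice_iff.2 ⟨by rw [norm_neg, hf], by simpa using hα⟩, ?_⟩
    rw [← neg_add', norm_neg, ← two_smul ℝ f, norm_smul, hf]
    norm_num
    linarith
  set δ := min (α / ‖x‖) (ε / 2)
  have hδ : 0 < δ := lt_min (div_pos hα (norm_pos_iff.2 hx)) (half_pos hε)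
  set u := ‖x‖⁻¹ • x
  obtain ⟨y, hy, huy⟩ := H u (norm_inv_norm_smul_self hx) δ hδ (-f) δ hδ
  rw [mem_ballSlice_iff, norm_neg, hf] at hy
  obtain ⟨g, hg, hguy⟩ := StrongDual.exists_norm_le_one_lt_apply_eval (u + y) huy
  have hgu : g u ≤ 1 := (g.apply_le_norm (norm_inv_norm_smul_self hx).le).trans hg
  have hgy : g y ≤ 1 := (g.apply_le_norm hy.1).trans hg
  rw [map_add] at hguy
  refine ⟨g, mem_wstarSlice_of_one_sub_lt hx hg (min_le_left _ _) (by linarith : 1 - δ < g u), ?_⟩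
  have hgfy := (g - f).apply_le_norm hy.1
  simp only [sub_apply, neg_apply] at hgfy hy
  linarith [min_le_right (α / ‖x‖) (ε / 2)]

theorem hasDaugavet_of_exists_mem_wstarSlice_two_sub_lt_norm_sub
    (H : ∀ f : StrongDual ℝ X, ‖f‖ = 1 → ∀ ε : ℝ, 0 < ε → ∀ (x : X) (α : ℝ), 0 < α →
      ∃ g ∈ wstarSlice x α, 2 - ε < ‖g - f‖) :
    HasDaugavet X := by
  intro x hx ε hε f α hα
  rcases eq_or_ne f 0 with rfl | hf
  · refine ⟨x, mem_ballSlice_iff.2 ⟨hx.le, by simpa using hα⟩, ?_⟩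
    rw [← two_smul ℝ x, norm_smul, hx]
    norm_num
    linarith
  set δ := min (α / ‖f‖) (ε / 2)
  have hδ : 0 < δ := lt_min (div_pos hα (norm_pos_iff.2 hf)) (half_pos hε)
  set F := ‖f‖⁻¹ • f
  obtain ⟨g, hg, hgF⟩ := H (-F) (by rw [norm_neg, norm_inv_norm_smul_self hf]) δ hδ x δ hδ
  rw [mem_wstarSlice_iff, hx] at hg
  rw [sub_neg_eq_add] at hgF
  obtain ⟨y, hy, hgFy⟩ := (g + F).exists_norm_le_one_lt_apply hgF
  have hgy : g y ≤ 1 := (g.apply_le_norm hy).trans hg.1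
  have hFy : F y ≤ 1 := (F.apply_le_norm hy).trans (norm_inv_norm_smul_self hf).le
  rw [add_apply] at hgFy
  refine ⟨y, mem_ballSlice_of_one_sub_lt hf hy (min_le_left _ _) (by linarith : 1 - δ < F y), ?_⟩
  have hgxy := StrongDual.apply_le_norm_of_norm_le_one hg.1 (x + y)
  rw [map_add] at hgxy
  linarith [min_le_right (α / ‖f‖) (ε / 2)]

end Daugavet

theorem stmt11_general {X : Type*} [NormedAddCommGroup X] [NormedSpace ℝ X] :
    HasDaugavet X ↔
      ∀ f : StrongDual ℝ X, ‖f‖ = 1 → ∀ ε : ℝ, 0 < ε → ∀ (x : X) (α : ℝ), 0 < α →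
        ∃ g ∈ wstarSlice x α, 2 - ε < ‖g - f‖ :=
  ⟨fun H _ hf _ hε x _ hα => H.exists_mem_wstarSlice_two_sub_lt_norm_sub hf hε x hα,
    hasDaugavet_of_exists_mem_wstarSlice_two_sub_lt_norm_sub⟩

/-- `X` has the Daugavet property iff for every `x* ∈ S_{X*}`, every `ε > 0` and every
weak-star slice `S` of `B_{X*}` there is `y* ∈ S` with `‖y* - x*‖ > 2 - ε`. -/
theorem stmt11 {X : Type*} [NormedAddCommGroup X] [NormedSpace ℝ X] [CompleteSpace X] :
    HasDaugavet X ↔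
      ∀ f : StrongDual ℝ X, ‖f‖ = 1 → ∀ ε : ℝ, 0 < ε → ∀ (x : X) (α : ℝ), 0 < α →
        ∃ g ∈ wstarSlice x α, 2 - ε < ‖g - f‖ :=
  stmt11_general

end
end

section
/- If a Banach space X has the WODP, then X has the Daugavet property. -/
open NormedSpace Metric Set MeasureTheory

noncomputable section

/-! Apply the WODP to the single point `x` with target `x' = x`: it gives `y` in the slice and
an operator `T` with `‖T‖ ≤ 1 + δ` sending both `x` and `y` close to `x`, so
`2 - 2δ < ‖T (x + y)‖ ≤ (1 + δ) ‖x + y‖`. -/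

theorem two_mul_norm_sub_lt_of_opNorm_le {E : Type*} [SeminormedAddCommGroup E]
    [NormedSpace ℝ E] (T : E →L[ℝ] E) {x y : E} {δ : ℝ} (hT : ‖T‖ ≤ 1 + δ)
    (hx : ‖T x - x‖ < δ) (hy : ‖T y - x‖ < δ) :
    2 * ‖x‖ - 2 * δ < (1 + δ) * ‖x + y‖ := by
  have h_two : ‖x + x‖ = 2 * ‖x‖ := by
    rw [← two_smul ℝ x, norm_smul, Real.norm_two]
  have h_decomp : x + x = T (x + y) - (T x - x) - (T y - x) := by
    rw [map_add]; abel
  have h_image : ‖T (x + y)‖ ≤ (1 + δ) * ‖x + y‖ :=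
    (T.le_opNorm _).trans (mul_le_mul_of_nonneg_right hT (norm_nonneg _))
  calc 2 * ‖x‖ - 2 * δ = ‖T (x + y) - (T x - x) - (T y - x)‖ - 2 * δ := by rw [← h_decomp, h_two]
    _ ≤ ‖T (x + y)‖ + ‖T x - x‖ + ‖T y - x‖ - 2 * δ := by
        gcongr; exact norm_sub_le_of_le (norm_sub_le _ _) le_rfl
    _ < (1 + δ) * ‖x + y‖ := by linarith

theorem stmt15_general {X : Type*} [NormedAddCommGroup X] [NormedSpace ℝ X]
    (h : HasWODP X) : HasDaugavet X := by
  intro x hx ε hε f α hα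
  obtain ⟨y, hyS, T, hT, hTx, hTy⟩ :=
    h 1 ![x] (fun _ => by simpa using hx) (ε / 4) (by positivity) f α hα x hx.le
  refine ⟨y, hyS, ?_⟩
  have h_bound := two_mul_norm_sub_lt_of_opNorm_le T hT (by simpa using hTx 0) hTy
  rw [hx] at h_bound
  -- `(1 + δ) (2 - 4δ) = 2 - 2δ - 4δ² < 2 - 2δ` with `δ = ε / 4`
  nlinarith [norm_nonneg (x + y)]

/-- The WODP implies the Daugavet property. -/
theorem stmt15 {X : Type*} [NormedAddCommGroup X] [NormedSpace ℝ X] [CompleteSpace X]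
    (h : HasWODP X) : HasDaugavet X :=
  stmt15_general h

end
end

section
/- Let X be a Banach space with the Daugavet property, let W_1, W_2 be nonempty relatively weakly open subsets of B_X and ε > 0. Then there exist x ∈ W_1 and y ∈ W_2 with ‖x − y‖ > 2 − ε; in particular every nonempty relatively weakly open subset of B_X, and every convex combination of slices of B_X, has diameter two. -/
open NormedSpace Metric Set MeasureTheory

noncomputable section

/-! Call `A ⊆ B_X` a Daugavet set if `sup_{y ∈ A} ‖x + y‖ = 2` for every unit vector `x`. Two
Daugavet sets `A`, `B` contain points at distance almost `2`: take `x ∈ A` of norm almost one and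
`y ∈ B` almost antipodal to `x / ‖x‖`.

In a Daugavet space every convex combination of slices `∑ λᵢ Sᵢ` is a Daugavet set: pick the
`wᵢ ∈ Sᵢ` one at a time, each by the Daugavet property against the normalised partial sum
`x + ∑_{j<i} λⱼ wⱼ`, so that the norms of the partial sums almost add up.

Every nonempty relatively weakly open subset of `B_X` contains such a combination (Bourgain's
lemma). Mapping `X` to `ℝⁿ` by the finitely many functionals defining the neighbourhood, the image
of `B_X` has compact closure `K`, and `K` lies in the closed convex hull of its farthest points
(points of `K` at maximal distance from some centre). Slices of `K` at a farthest point are small,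
so a convex combination of such slices lies close to any prescribed point of `K`. -/

open Filter
open scoped InnerProductSpace Topology

section Daugavet

variable {X : Type*} [NormedAddCommGroup X]

def IsDaugavetSet (A : Set X) : Prop :=
  A ⊆ closedBall 0 1 ∧ ∀ x : X, ‖x‖ = 1 → ∀ ε : ℝ, 0 < ε → ∃ y ∈ A, 2 - ε < ‖x + y‖

theorem IsDaugavetSet.mono {A B : Set X} (hA : IsDaugavetSet A) (hAB : A ⊆ B)
    (hB : B ⊆ closedBall 0 1) : IsDaugavetSet B :=
  ⟨hB, fun x hx ε hε => (hA.2 x hx ε hε).imp fun _ ⟨hyA, hy⟩ => ⟨hAB hyA, hy⟩⟩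

variable [NormedSpace ℝ X]

theorem mul_norm_add_sub_one_le_norm_smul_add_smul {x y : X} (hx : ‖x‖ ≤ 1) (hy : ‖y‖ ≤ 1)
    {s t : ℝ} (hs : 0 ≤ s) (ht : 0 ≤ t) : (s + t) * (‖x + y‖ - 1) ≤ ‖s • x + t • y‖ := by
  wlog hts : t ≤ s generalizing x y s t
  · simpa only [add_comm] using this hy hx ht hs (le_of_not_ge hts)
  have hxy : ‖x + y‖ ≤ 2 := (norm_add_le x y).trans (by linarith)
  have hsplit : s • (x + y) = (s • x + t • y) + (s - t) • y := by
    rw [smul_add, sub_smul]; abel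
  have hle : s * ‖x + y‖ ≤ ‖s • x + t • y‖ + (s - t) := by
    calc s * ‖x + y‖ = ‖s • (x + y)‖ := by rw [norm_smul, Real.norm_of_nonneg hs]
      _ ≤ ‖s • x + t • y‖ + (s - t) * ‖y‖ := by
        rw [hsplit]
        refine (norm_add_le _ _).trans_eq ?_
        rw [norm_smul, Real.norm_of_nonneg (sub_nonneg.2 hts)]
      _ ≤ ‖s • x + t • y‖ + (s - t) := by
        gcongr
        exact mul_le_of_le_one_right (sub_nonneg.2 hts) hy
  nlinarith

theorem IsDaugavetSet.exists_lt_norm_sub [Nontrivial X] {A B : Set X} (hA : IsDaugavetSet A)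
    (hB : IsDaugavetSet B) {ε : ℝ} (hε : 0 < ε) : ∃ x ∈ A, ∃ y ∈ B, 2 - ε < ‖x - y‖ := by
  obtain ⟨x₀, hx₀⟩ := exists_norm_eq X zero_le_one
  obtain ⟨η, hη, hηε, hη1⟩ : ∃ η : ℝ, 0 < η ∧ 3 * η ≤ ε ∧ 3 * η ≤ 1 :=
    ⟨min ε 1 / 3, by positivity, by linarith [min_le_left ε 1], by linarith [min_le_right ε 1]⟩
  obtain ⟨x, hxA, hx⟩ := hA.2 x₀ hx₀ η hη
  have hx1 : 1 - η < ‖x‖ := by linarith [norm_add_le x₀ x]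
  have hx0 : x ≠ 0 := norm_pos_iff.1 (by linarith)
  have hx' : ‖-((‖x‖⁻¹ : ℝ) • x)‖ = 1 := by rw [norm_neg]; exact norm_smul_inv_norm hx0
  obtain ⟨y, hyB, hy⟩ := hB.2 _ hx' η hη
  refine ⟨x, hxA, y, hyB, ?_⟩
  have key := mul_norm_add_sub_one_le_norm_smul_add_smul hx'.le
    (mem_closedBall_zero_iff.1 (hB.1 hyB)) (norm_nonneg x) zero_le_one
  have hxy : ‖x‖ • -((‖x‖⁻¹ : ℝ) • x) + (1 : ℝ) • y = -(x - y) := by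
    rw [smul_neg, smul_inv_smul₀ (norm_ne_zero_iff.2 hx0), one_smul]
    abel
  rw [hxy, norm_neg] at key
  nlinarith

theorem IsDaugavetSet.diam_eq_two [Nontrivial X] {A : Set X} (hA : IsDaugavetSet A) :
    diam A = 2 := by
  refine le_antisymm ((diam_mono hA.1 isBounded_closedBall).trans ?_)
    (le_of_forall_pos_lt_add fun ε hε => ?_)
  · simpa using diam_closedBall (x := (0 : X)) zero_le_one
  · obtain ⟨x, hx, y, hy, hxy⟩ := hA.exists_lt_norm_sub hA hε
    have := dist_le_diam_of_mem (isBounded_closedBall.subset hA.1) hx hy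
    rw [dist_eq_norm] at this
    linarith

theorem HasDaugavet.exists_mem_ballSlice_mul_le_norm_add_smul_s17 (h : HasDaugavet X) {z : X}
    (hz : z ≠ 0) {t : ℝ} (ht : 0 ≤ t) (f : StrongDual ℝ X) {α : ℝ} (hα : 0 < α) {δ : ℝ}
    (hδ : 0 < δ) : ∃ y ∈ ballSlice f α, (‖z‖ + t) * (1 - δ) ≤ ‖z + t • y‖ := by
  have hx : ‖(‖z‖⁻¹ : ℝ) • z‖ = 1 := norm_smul_inv_norm hz
  obtain ⟨y, hy, hfar⟩ := h _ hx δ hδ f α hα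
  refine ⟨y, hy, ?_⟩
  have key := mul_norm_add_sub_one_le_norm_smul_add_smul hx.le hy.1 (norm_nonneg z) ht
  rw [smul_inv_smul₀ (norm_ne_zero_iff.2 hz)] at key
  exact (mul_le_mul_of_nonneg_left (by linarith) (by positivity)).trans key

theorem HasDaugavet.exists_mem_ballSlice_mul_pow_le_norm_add_sum (h : HasDaugavet X) {δ : ℝ}
    (hδ0 : 0 < δ) (hδ1 : δ < 1) {n : ℕ} (lam : Fin n → ℝ) (hlam : ∀ i, 0 ≤ lam i)
    (f : Fin n → StrongDual ℝ X) {α : Fin n → ℝ} (hα : ∀ i, 0 < α i) {z : X} (hz : z ≠ 0) :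
    ∃ w : Fin n → X, (∀ i, w i ∈ ballSlice (f i) (α i)) ∧
      (‖z‖ + ∑ i, lam i) * (1 - δ) ^ n ≤ ‖z + ∑ i, lam i • w i‖ := by
  induction n generalizing z with
  | zero => exact ⟨Fin.elim0, fun i => i.elim0, by simp⟩
  | succ n ih =>
    obtain ⟨y, hy, hzy⟩ :=
      h.exists_mem_ballSlice_mul_le_norm_add_smul_s17 hz (hlam 0) (f 0) (hα 0) hδ0
    have hz' : z + lam 0 • y ≠ 0 := norm_pos_iff.1 <| (mul_pos
      (add_pos_of_pos_of_nonneg (norm_pos_iff.2 hz) (hlam 0)) (sub_pos.2 hδ1)).trans_le hzy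
    obtain ⟨w, hw, hzw⟩ := ih (Fin.tail lam) (fun i => hlam i.succ) (Fin.tail f)
      (fun i => hα i.succ) hz'
    refine ⟨Fin.cons y w, Fin.cases hy hw, ?_⟩
    have htail : 0 ≤ ∑ i, Fin.tail lam i := Finset.sum_nonneg fun i _ => hlam i.succ
    rw [Fin.sum_univ_succ, Fin.sum_univ_succ]
    simp only [Fin.cons_zero, Fin.cons_succ, ← add_assoc]
    calc (‖z‖ + lam 0 + ∑ i, Fin.tail lam i) * (1 - δ) ^ (n + 1)
        ≤ ((‖z‖ + lam 0) * (1 - δ) + ∑ i, Fin.tail lam i) * (1 - δ) ^ n := by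
          rw [pow_succ]
          have : 0 ≤ (1 - δ) ^ n := pow_nonneg (by linarith) n
          nlinarith [mul_nonneg (mul_nonneg htail this) hδ0.le]
      _ ≤ (‖z + lam 0 • y‖ + ∑ i, Fin.tail lam i) * (1 - δ) ^ n := by
          gcongr
      _ ≤ _ := hzw

def sliceCombo {n : ℕ} (lam : Fin n → ℝ) (f : Fin n → StrongDual ℝ X) (α : Fin n → ℝ) :
    Set X :=
  {z | ∃ w : Fin n → X, (∀ i, w i ∈ ballSlice (f i) (α i)) ∧ z = ∑ i, lam i • w i}

theorem sliceCombo_subset_closedBall {n : ℕ} {lam : Fin n → ℝ} (hlam : ∀ i, 0 ≤ lam i)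
    (hsum : ∑ i, lam i = 1) (f : Fin n → StrongDual ℝ X) (α : Fin n → ℝ) :
    sliceCombo lam f α ⊆ closedBall 0 1 := by
  rintro _ ⟨w, hw, rfl⟩
  exact (convex_closedBall 0 1).sum_mem (fun i _ => hlam i) hsum
    fun i _ => mem_closedBall_zero_iff.2 (hw i).1

theorem HasDaugavet.isDaugavetSet_sliceCombo (h : HasDaugavet X) {n : ℕ} {lam : Fin n → ℝ}
    (hlam : ∀ i, 0 ≤ lam i) (hsum : ∑ i, lam i = 1) (f : Fin n → StrongDual ℝ X)
    {α : Fin n → ℝ} (hα : ∀ i, 0 < α i) : IsDaugavetSet (sliceCombo lam f α) := by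
  refine ⟨sliceCombo_subset_closedBall hlam hsum f α, fun x hx ε hε => ?_⟩
  have hcont : Continuous fun δ : ℝ => 2 * (1 - δ) ^ n := by fun_prop
  have hlim : Tendsto (fun δ : ℝ => 2 * (1 - δ) ^ n) (𝓝 0) (𝓝 2) := by
    simpa using hcont.tendsto 0
  have hsmall : ∀ᶠ δ in 𝓝 0, δ < 1 ∧ 2 - ε < 2 * (1 - δ) ^ n :=
    (eventually_lt_nhds one_pos).and (hlim.eventually (lt_mem_nhds (by linarith)))
  obtain ⟨δ, ⟨hδ1, hδε⟩, hδ0⟩ :=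
    ((hsmall.filter_mono nhdsWithin_le_nhds).and (self_mem_nhdsWithin (s := Ioi 0))).exists
  obtain ⟨w, hw, hxw⟩ := h.exists_mem_ballSlice_mul_pow_le_norm_add_sum hδ0 hδ1 lam hlam f hα
    (norm_ne_zero_iff.1 (hx.trans_ne one_ne_zero))
  rw [hx, hsum, one_add_one_eq_two] at hxw
  exact ⟨_, ⟨w, hw, rfl⟩, hδε.trans_le hxw⟩

end Daugavet

theorem le_csSup_image_of_mem_closure {α β : Type*} [TopologicalSpace α] [TopologicalSpace β]
    [ConditionallyCompleteLattice β] [ClosedIicTopology β] {f : α → β} (hf : Continuous f)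
    {s : Set α} (hbdd : BddAbove (f '' s)) {a : α} (ha : a ∈ closure s) : f a ≤ sSup (f '' s) :=
  isClosed_Iic.closure_subset_iff.2 (fun _ hy => le_csSup hbdd hy)
    (image_closure_subset_closure_image hf ⟨a, ha, rfl⟩)

theorem exists_fin_of_mem_convexHull {R E : Type*} [Field R] [LinearOrder R]
    [IsStrictOrderedRing R] [AddCommGroup E] [Module R E] {s : Set E} {x : E}
    (hx : x ∈ convexHull R s) :
    ∃ (m : ℕ) (w : Fin m → R) (z : Fin m → E), (∀ i, 0 ≤ w i) ∧ ∑ i, w i = 1 ∧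
      (∀ i, z i ∈ s) ∧ ∑ i, w i • z i = x := by
  obtain ⟨ι, _, w, z, hw₀, hw₁, hz, rfl⟩ := mem_convexHull_iff_exists_fintype.1 hx
  let e := (Fintype.equivFin ι).symm
  exact ⟨_, w ∘ e, z ∘ e, fun i => hw₀ _, (e.sum_comp w).trans hw₁, fun i => hz _,
    e.sum_comp fun i => w i • z i⟩

section FarPoints

variable {E : Type*} [NormedAddCommGroup E] [InnerProductSpace ℝ E]

def farPoints (K : Set E) : Set E := {m ∈ K | ∃ c : E, ∀ y ∈ K, ‖y - c‖ ≤ ‖m - c‖}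

theorem norm_sub_sq_le_two_inner_of_norm_sub_le {c m y : E} (hy : ‖y - c‖ ≤ ‖m - c‖) :
    ‖y - m‖ ^ 2 ≤ 2 * ⟪m - c, m - y⟫_ℝ := by
  have hsplit : y - m = (y - c) - (m - c) := by abel
  have hinner : ⟪m - c, m - y⟫_ℝ = ‖m - c‖ ^ 2 - ⟪y - c, m - c⟫_ℝ := by
    rw [show m - y = (m - c) - (y - c) by abel, inner_sub_right, real_inner_self_eq_norm_sq,
      real_inner_comm]
  rw [hsplit, norm_sub_sq_real, hinner]
  nlinarith [norm_nonneg (y - c), norm_nonneg (m - c)]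

theorem subset_closure_convexHull_farPoints [CompleteSpace E] {K : Set E} (hK : IsCompact K) :
    K ⊆ closure (convexHull ℝ (farPoints K)) := by
  intro q hqK
  by_contra hq
  obtain ⟨φ, u, hφu, huq⟩ :=
    geometric_hahn_banach_closed_point (convex_convexHull ℝ _).closure isClosed_closure hq
  set w := (InnerProductSpace.toDual ℝ E).symm φ
  have hw : ∀ y, ⟪w, y⟫_ℝ = φ y := fun y => InnerProductSpace.toDual_symm_apply
  obtain ⟨R, hR⟩ := hK.isBounded.subset_closedBall q
  -- seen from a centre `c` far out in the direction `-w`, every point of `K` with `φ < u` is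
  -- nearer than `q`, so the farthest point of `K` from `c` cannot lie in the convex hull
  set t := (R ^ 2 + 1) / (φ q - u)
  have ht : 0 < t := div_pos (by positivity) (by linarith)
  set c := q - t • w
  obtain ⟨m, hmK, hmax⟩ := hK.exists_isMaxOn ⟨q, hqK⟩
    (continuous_id.sub continuous_const).norm.continuousOn (f := fun y => ‖y - c‖)
  have hφm : φ m < u :=
    hφu m (subset_closure (subset_convexHull ℝ _ ⟨hmK, c, fun y hy => hmax hy⟩))
  have hmq : ‖m - q‖ ≤ R := by simpa [dist_eq_norm] using hR hmK
  have hexpand : ‖m - c‖ ^ 2 = ‖m - q‖ ^ 2 + 2 * t * (φ m - φ q) + ‖q - c‖ ^ 2 := by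
    have hqc : q - c = t • w := sub_sub_cancel q _
    rw [show m - c = (m - q) + (q - c) by abel, norm_add_sq_real, hqc, real_inner_smul_right,
      real_inner_comm, hw, map_sub]
    ring
  have htφ : t * (φ q - u) = R ^ 2 + 1 := div_mul_cancel₀ _ (by linarith)
  have hfar : ‖q - c‖ ≤ ‖m - c‖ := hmax hqK
  nlinarith [mul_pos ht (sub_pos.2 hφm), norm_nonneg (q - c), norm_nonneg (m - c),
    mul_self_le_mul_self (norm_nonneg _) hmq, mul_self_le_mul_self (norm_nonneg _) hfar]

theorem exists_sum_smul_near_of_mem_closure [CompleteSpace E] {S : Set E}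
    (hS : IsCompact (closure S)) {p : E} (hp : p ∈ closure S) {δ : ℝ} (hδ : 0 < δ) :
    ∃ (m : ℕ) (lam : Fin m → ℝ) (v : Fin m → E) (β : Fin m → ℝ),
      (∀ j, 0 ≤ lam j) ∧ ∑ j, lam j = 1 ∧ (∀ j, 0 < β j) ∧
      ∀ q : Fin m → E, (∀ j, q j ∈ S) →
        (∀ j, sSup ((fun z => ⟪v j, z⟫_ℝ) '' S) - β j < ⟪v j, q j⟫_ℝ) →
        ‖∑ j, lam j • q j - p‖ < δ := by
  obtain ⟨_, hp', hpp'⟩ :=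
    Metric.mem_closure_iff.1 (subset_closure_convexHull_farPoints hS hp) (δ / 2) (half_pos hδ)
  obtain ⟨m, lam, pt, hlam, hsum, hpt, rfl⟩ := exists_fin_of_mem_convexHull hp'
  choose c hc using fun j => (hpt j).2
  -- a slice of depth `δ² / 8` at a farthest point has radius `δ / 2`
  refine ⟨m, lam, fun j => pt j - c j, fun _ => δ ^ 2 / 8, hlam, hsum, fun _ => by positivity,
    fun q hqS hq => ?_⟩
  have hnear : ∀ j, ‖q j - pt j‖ ≤ δ / 2 := by
    intro j
    have hcont : Continuous fun z => ⟪pt j - c j, z⟫_ℝ := continuous_const.inner continuous_id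
    have hsup : ⟪pt j - c j, pt j⟫_ℝ ≤ sSup ((fun z => ⟪pt j - c j, z⟫_ℝ) '' S) :=
      le_csSup_image_of_mem_closure hcont
        ((hS.image hcont).bddAbove.mono (image_mono subset_closure)) (hpt j).1
    have hfar := norm_sub_sq_le_two_inner_of_norm_sub_le (hc j (q j) (subset_closure (hqS j)))
    have hqj : sSup ((fun z => ⟪pt j - c j, z⟫_ℝ) '' S) - δ ^ 2 / 8 < ⟪pt j - c j, q j⟫_ℝ :=
      hq j
    rw [inner_sub_right] at hfar
    nlinarith [norm_nonneg (q j - pt j)]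
  have hcombo : ∑ j, lam j • q j - ∑ j, lam j • pt j ∈ closedBall (0 : E) (δ / 2) := by
    simp only [← Finset.sum_sub_distrib, ← smul_sub]
    exact (convex_closedBall 0 _).sum_mem (fun j _ => hlam j) hsum
      fun j _ => mem_closedBall_zero_iff.2 (hnear j)
  calc ‖∑ j, lam j • q j - p‖
      ≤ ‖∑ j, lam j • q j - ∑ j, lam j • pt j‖ + ‖∑ j, lam j • pt j - p‖ :=
        norm_sub_le_norm_sub_add_norm_sub _ _ _
    _ < δ / 2 + δ / 2 := by
      refine add_lt_add_of_le_of_lt (mem_closedBall_zero_iff.1 hcombo) ?_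
      rwa [← dist_eq_norm, dist_comm]
    _ = δ := add_halves δ

end FarPoints

section Bourgain

variable {X : Type*} [NormedAddCommGroup X] [NormedSpace ℝ X]

theorem exists_sliceCombo_subset {n : ℕ} (f : Fin n → StrongDual ℝ X) {u : X} (hu : ‖u‖ ≤ 1)
    {δ : ℝ} (hδ : 0 < δ) :
    ∃ (m : ℕ) (lam : Fin m → ℝ) (g : Fin m → StrongDual ℝ X) (β : Fin m → ℝ),
      (∀ j, 0 ≤ lam j) ∧ ∑ j, lam j = 1 ∧ (∀ j, 0 < β j) ∧
      sliceCombo lam g β ⊆ {y | ∀ i, |f i (y - u)| < δ} := by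
  let F : X →L[ℝ] EuclideanSpace ℝ (Fin n) :=
    ((EuclideanSpace.equiv (Fin n) ℝ).symm : (Fin n → ℝ) →L[ℝ] EuclideanSpace ℝ (Fin n)).comp
      (ContinuousLinearMap.pi f)
  have hS : IsCompact (closure (F '' closedBall 0 1)) :=
    (F.lipschitz.isBounded_image isBounded_closedBall).isCompact_closure
  obtain ⟨m, lam, v, β, hlam, hsum, hβ, hnear⟩ := exists_sum_smul_near_of_mem_closure hS
    (subset_closure ⟨u, mem_closedBall_zero_iff.2 hu, rfl⟩) hδ
  refine ⟨m, lam, fun j => (innerSL ℝ (v j)).comp F, β, hlam, hsum, hβ, ?_⟩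
  rintro _ ⟨w, hw, rfl⟩ i
  have hFw : ‖F (∑ j, lam j • w j - u)‖ < δ := by
    rw [map_sub, map_sum]
    simp only [map_smul]
    refine hnear _ (fun j => ⟨w j, mem_closedBall_zero_iff.2 (hw j).1, rfl⟩) fun j => ?_
    rw [image_image]
    exact (hw j).2
  exact (PiLp.norm_apply_le _ i).trans_lt hFw

theorem IsRelWeakOpenBall.isDaugavetSet {W : Set X} (hW : IsRelWeakOpenBall W)
    (h : HasDaugavet X) (hne : W.Nonempty) : IsDaugavetSet W := by
  obtain ⟨U, hU, rfl⟩ := hW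
  obtain ⟨u, huU, hu⟩ := hne
  obtain ⟨n, f, δ, hδ, hfU⟩ := hU u huU
  obtain ⟨m, lam, g, β, hlam, hsum, hβ, hsub⟩ :=
    exists_sliceCombo_subset f (mem_closedBall_zero_iff.1 hu) hδ
  exact (h.isDaugavetSet_sliceCombo hlam hsum g hβ).mono
    (subset_inter (hsub.trans hfU) (sliceCombo_subset_closedBall hlam hsum g β))
    inter_subset_right

end Bourgain

theorem stmt17_general {X : Type*} [NormedAddCommGroup X] [NormedSpace ℝ X]
    [Nontrivial X] (h : HasDaugavet X) :
    (∀ W₁ W₂ : Set X, IsRelWeakOpenBall W₁ → IsRelWeakOpenBall W₂ →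
      W₁.Nonempty → W₂.Nonempty → ∀ ε : ℝ, 0 < ε →
        ∃ x ∈ W₁, ∃ y ∈ W₂, 2 - ε < ‖x - y‖) ∧
    (∀ W : Set X, IsRelWeakOpenBall W → W.Nonempty → Metric.diam W = 2) ∧
    (∀ (n : ℕ) (lam : Fin n → ℝ) (f : Fin n → StrongDual ℝ X) (α : Fin n → ℝ),
      (∀ i, 0 ≤ lam i ∧ lam i ≤ 1) → (∑ i, lam i) = 1 → (∀ i, 0 < α i) →
      Metric.diam {z : X | ∃ w : Fin n → X,
        (∀ i, w i ∈ ballSlice (f i) (α i)) ∧ z = ∑ i, lam i • w i} = 2) :=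
  ⟨fun _ _ hW₁ hW₂ hne₁ hne₂ _ hε =>
      (hW₁.isDaugavetSet h hne₁).exists_lt_norm_sub (hW₂.isDaugavetSet h hne₂) hε,
    fun _ hW hne => (hW.isDaugavetSet h hne).diam_eq_two,
    fun _ _ f _ hlam hsum hα =>
      (h.isDaugavetSet_sliceCombo (fun i => (hlam i).1) hsum f hα).diam_eq_two⟩

/-- If `X` has the Daugavet property then any two nonempty relatively weakly open subsets of
`B_X` contain points at distance almost `2`; in particular every nonempty relatively weakly
open subset and every convex combination of slices of `B_X` has diameter two. -/
theorem stmt17 {X : Type*} [NormedAddCommGroup X] [NormedSpace ℝ X] [CompleteSpace X]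
    [Nontrivial X] (h : HasDaugavet X) :
    (∀ W₁ W₂ : Set X, IsRelWeakOpenBall W₁ → IsRelWeakOpenBall W₂ →
      W₁.Nonempty → W₂.Nonempty → ∀ ε : ℝ, 0 < ε →
        ∃ x ∈ W₁, ∃ y ∈ W₂, 2 - ε < ‖x - y‖) ∧
    (∀ W : Set X, IsRelWeakOpenBall W → W.Nonempty → Metric.diam W = 2) ∧
    (∀ (n : ℕ) (lam : Fin n → ℝ) (f : Fin n → StrongDual ℝ X) (α : Fin n → ℝ),
      (∀ i, 0 ≤ lam i ∧ lam i ≤ 1) → (∑ i, lam i) = 1 → (∀ i, 0 < α i) →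
      Metric.diam {z : X | ∃ w : Fin n → X,
        (∀ i, w i ∈ ballSlice (f i) (α i)) ∧ z = ∑ i, lam i • w i} = 2) :=
  stmt17_general h
end
end
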